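/- For every integer n ≥ 3, C_{n+2}/(n+2) − C_n/n = (−1)^{n+1} · 2^{n−2} / ((n−3)! · n · (n−1) · (n+2)). -/

import Mathlib

/-!
With `E n = ∑_{k<n} (-2)^k / k!` the partial sums of the series of `e^{-2}`, the increments
`L_{n+1} - L_n = ∑_{k=1}^{n+1} (-1)^{k+1} 2^{k-1}/k!` equal `(1 - E (n+2)) / 2`, which sums to
`L_n = (n+1)(1 - E (n+1))/2 - E n`. Hence `C_n / n = (1 - E (n-3))/2 - (n-2)(-2)^{n-3} / (2 n (n-3)!)`,
and in the difference `C_{n+2}/(n+2) - C_n/n` the partial sums cancel except for two terms of the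
series, leaving a rational multiple of `2^{n-2}/(n-3)!`.
-/

/-- `Lseg n = Σ_{k=1}^{n} (−1)^{k+1} (2^{k−1}/k!) (n−k+1)`, the expected number of
transmissions in one slot from a fully occupied segment of `n` nodes (so `Lseg 0 = 0`). -/
noncomputable def Lseg (n : ℕ) : ℝ :=
  ∑ k ∈ Finset.Icc 1 n,
    (-1 : ℝ) ^ (k + 1) * (2 ^ (k - 1) / (Nat.factorial k : ℝ)) * ((n : ℝ) - (k : ℝ) + 1)

/-- `C_k = 1 + L_{k−3}`, the expected number of transmissions in one slot from a fully
occupied circle of `k ≥ 3` nodes. -/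
noncomputable def Ccirc (k : ℕ) : ℝ := 1 + Lseg (k - 3)

open Finset Nat

noncomputable def expPartialSum (x : ℝ) (n : ℕ) : ℝ :=
  ∑ k ∈ range n, x ^ k / (k ! : ℝ)

lemma expPartialSum_succ (x : ℝ) (n : ℕ) :
    expPartialSum x (n + 1) = expPartialSum x n + x ^ n / (n ! : ℝ) :=
  sum_range_succ _ _

lemma sum_Icc_one_neg_one_pow_mul_two_pow_div_factorial (n : ℕ) :
    ∑ k ∈ Icc 1 n, (-1 : ℝ) ^ (k + 1) * (2 ^ (k - 1) / (k ! : ℝ)) =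
      (1 - expPartialSum (-2) (n + 1)) / 2 := by
  induction n with
  | zero => simp [expPartialSum]
  | succ n ih =>
    rw [sum_Icc_succ_top (by omega), ih, expPartialSum_succ _ (n + 1), Nat.add_sub_cancel,
      neg_pow (2 : ℝ), pow_succ, pow_succ, pow_succ]
    field_simp
    ring

lemma Lseg_succ (n : ℕ) :
    Lseg (n + 1) = Lseg n + ∑ k ∈ Icc 1 (n + 1), (-1 : ℝ) ^ (k + 1) * (2 ^ (k - 1) / (k ! : ℝ)) := by
  -- the term `k = n + 1` of `Lseg n`, extended to `Icc 1 (n + 1)`, carries the factor `n - k + 1 = 0`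
  have hLseg : Lseg n = ∑ k ∈ Icc 1 (n + 1),
      (-1 : ℝ) ^ (k + 1) * (2 ^ (k - 1) / (k ! : ℝ)) * ((n : ℝ) - k + 1) := by
    rw [sum_Icc_succ_top (by omega), Lseg]
    simp
  rw [hLseg, Lseg, ← sum_add_distrib]
  exact sum_congr rfl fun k _ => by push_cast; ring

lemma Lseg_eq_expPartialSum (n : ℕ) :
    Lseg n = ((n : ℝ) + 1) * (1 - expPartialSum (-2) (n + 1)) / 2 - expPartialSum (-2) n := by
  induction n with
  | zero => simp [Lseg, expPartialSum]
  | succ n ih =>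
    rw [Lseg_succ, ih, sum_Icc_one_neg_one_pow_mul_two_pow_div_factorial,
      expPartialSum_succ _ (n + 1), expPartialSum_succ _ n, factorial_succ]
    push_cast
    field_simp
    ring

lemma Ccirc_add_three_div (m : ℕ) :
    Ccirc (m + 3) / ((m + 3 : ℕ) : ℝ) =
      (1 - expPartialSum (-2) m) / 2 - ((m : ℝ) + 1) * (-2) ^ m / (2 * ((m : ℝ) + 3) * m !) := by
  rw [Ccirc, Nat.add_sub_cancel, Lseg_eq_expPartialSum, expPartialSum_succ]
  push_cast
  field_simp
  ring

theorem Ccirc_div_diff (n : ℕ) (hn : 3 ≤ n) :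
    Ccirc (n + 2) / ((n : ℝ) + 2) - Ccirc n / (n : ℝ) =
      (-1 : ℝ) ^ (n + 1) * 2 ^ (n - 2) /
        ((Nat.factorial (n - 3) : ℝ) * n * ((n : ℝ) - 1) * ((n : ℝ) + 2)) := by
  obtain ⟨m, rfl⟩ := Nat.exists_eq_add_of_le' hn
  have hshift : ((m + 3 : ℕ) : ℝ) + 2 = ((m + 2 + 3 : ℕ) : ℝ) := by push_cast; ring
  rw [hshift, show m + 3 + 2 = m + 2 + 3 from rfl, Ccirc_add_three_div, Ccirc_add_three_div,
    expPartialSum_succ, expPartialSum_succ]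
  simp only [factorial_succ, neg_pow (2 : ℝ), pow_succ]
  push_cast
  rw [show (m : ℝ) + 3 - 1 = m + 2 by ring]
  field_simp
  ring
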